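/- Let p₁ := ( (√5 − √(4−√5))/4 , (√(5+2√5) − √(2+3/√5))/4 ) ∈ ℝ² (Euclidean norm), and let R be the rotation of ℝ² about the origin by angle 2π/5, i.e. R(u) = (cos(2π/5)·u₁ − sin(2π/5)·u₂, sin(2π/5)·u₁ + cos(2π/5)·u₂). Then dist p₁ (R p₁) = (√5 − √(4−√5))/2. -/

import Mathlib

/-- The vertex `p₁` of the small central pentagon in the partition of the regular
unit pentagon. -/
noncomputable def innerVertex : EuclideanSpace ℝ (Fin 2) :=
  !₂[(Real.sqrt 5 - Real.sqrt (4 - Real.sqrt 5)) / 4,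
    (Real.sqrt (5 + 2 * Real.sqrt 5) - Real.sqrt (2 + 3 / Real.sqrt 5)) / 4]

/-- Rotation of `ℝ²` about the origin by the angle `θ`. -/
noncomputable def rotByAngle (θ : ℝ) (u : EuclideanSpace ℝ (Fin 2)) :
    EuclideanSpace ℝ (Fin 2) :=
  !₂[Real.cos θ * u 0 - Real.sin θ * u 1, Real.sin θ * u 0 + Real.cos θ * u 1]

/-! Rotating `u` by `θ` moves it by `‖u - R_θ u‖² = 2 (1 - cos θ) ‖u‖²`, and `cos (2π/5) = (√5 - 1)/4`,
so the claim reduces to `(5 - √5) ‖p₁‖² = (√5 - √(4 - √5))² / 2`. In `‖p₁‖²` the only term that is not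
a polynomial in `√5` and `√(4 - √5)` is the cross term `√(5 + 2√5) · √(2 + 3/√5)`; squaring both sides
identifies `(5 - √5)` times it with `(3 + √5) √5 √(4 - √5)`. -/

open Real

lemma dist_rotByAngle_sq (θ : ℝ) (u : EuclideanSpace ℝ (Fin 2)) :
    dist u (rotByAngle θ u) ^ 2 = 2 * (1 - cos θ) * ‖u‖ ^ 2 := by
  rw [EuclideanSpace.dist_eq, EuclideanSpace.norm_eq, sq_sqrt (by positivity),
    sq_sqrt (by positivity)]
  simp only [Fin.sum_univ_two, rotByAngle, Real.dist_eq, sq_abs, Real.norm_eq_abs, Fin.isValue,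
    Matrix.cons_val_zero, Matrix.cons_val_one, Matrix.cons_val_fin_one]
  linear_combination (u 0 ^ 2 + u 1 ^ 2) * sin_sq_add_cos_sq θ

lemma cos_two_pi_div_five : cos (2 * π / 5) = (√5 - 1) / 4 := by
  rw [show 2 * π / 5 = 2 * (π / 5) by ring, cos_two_mul, cos_pi_div_five]
  linear_combination (1 / 8 : ℝ) * sq_sqrt (show (0 : ℝ) ≤ 5 by norm_num)

lemma sqrt_four_sub_sqrt_five_le_sqrt_five : √(4 - √5) ≤ √5 :=
  sqrt_le_sqrt (by linarith [sqrt_nonneg 5])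

lemma three_div_sqrt_five : 3 / √5 = 3 * √5 / 5 := by
  have h5pos : 0 < √5 := by positivity
  field_simp
  linear_combination -sq_sqrt (show (0 : ℝ) ≤ 5 by norm_num)

lemma five_sub_sqrt_five_mul_sqrt_mul_sqrt :
    (5 - √5) * (√(5 + 2 * √5) * √(2 + 3 / √5)) = (3 + √5) * (√5 * √(4 - √5)) := by
  have h5 : √5 ^ 2 = 5 := sq_sqrt (by norm_num)
  have h5lt : √5 < 3 := by nlinarith [sqrt_nonneg 5]
  rw [← pow_left_inj₀ (mul_nonneg (by linarith) (by positivity)) (by positivity) two_ne_zero,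
    mul_pow, mul_pow, mul_pow, mul_pow, sq_sqrt (show 0 ≤ 5 + 2 * √5 by positivity),
    sq_sqrt (show 0 ≤ 2 + 3 / √5 by positivity), sq_sqrt (show 0 ≤ 4 - √5 by linarith),
    three_div_sqrt_five]
  linear_combination (√5 ^ 3 + 16 / 5 * √5 ^ 2 - 15 * √5 - 50) * h5

lemma five_sub_sqrt_five_mul_norm_innerVertex_sq :
    (5 - √5) * ‖innerVertex‖ ^ 2 = (√5 - √(4 - √5)) ^ 2 / 2 := by
  have h5 : √5 ^ 2 = 5 := sq_sqrt (by norm_num)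
  have key := five_sub_sqrt_five_mul_sqrt_mul_sqrt
  rw [EuclideanSpace.norm_eq, sq_sqrt (by positivity)]
  simp only [innerVertex, norm_eq_abs, sq_abs, Fin.sum_univ_two, Fin.isValue,
    Matrix.cons_val_zero, Matrix.cons_val_one, Matrix.cons_val_fin_one]
  have ha : √(4 - √5) ^ 2 = 4 - √5 := sq_sqrt (by nlinarith [sqrt_nonneg 5])
  have hb : √(5 + 2 * √5) ^ 2 = 5 + 2 * √5 := sq_sqrt (by positivity)
  have hc : √(2 + 3 / √5) ^ 2 = 2 + 3 * √5 / 5 := by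
    rw [sq_sqrt (by positivity), three_div_sqrt_five]
  linear_combination
    (1 / 16) * ((-3 - √5) * ha + (5 - √5) * (hb + hc) - 2 * key + (-23 / 5 - √5) * h5)

/-- The side length of the small central pentagon of the tile partition equals
`s = (√5 − √(4−√5))/2 ≈ 0.45`. -/
theorem inner_pentagon_side_length :
    dist innerVertex (rotByAngle (2 * Real.pi / 5) innerVertex) =
      (Real.sqrt 5 - Real.sqrt (4 - Real.sqrt 5)) / 2 := by
  rw [← pow_left_inj₀ dist_nonneg (by linarith [sqrt_four_sub_sqrt_five_le_sqrt_five]) two_ne_zero,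
    dist_rotByAngle_sq, cos_two_pi_div_five]
  linear_combination (1 / 2 : ℝ) * five_sub_sqrt_five_mul_norm_innerVertex_sq
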